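/- Let n be a nonempty finite index type, M a symmetric positive-definite square real matrix of size n, S a square real matrix of size n, F : n → ℝ, and q̄ : n → ℝ with S *ᵥ q̄ = 0 and F ⬝ᵥ q̄ = 1. Assume that for every w : n → ℝ with w ≠ 0 and F ⬝ᵥ w = 0, one has w ⬝ᵥ (S *ᵥ w) > 0. Let q : ℝ → (n → ℝ) be differentiable with M *ᵥ (q'(t)) + S *ᵥ (q(t)) = 0 and F ⬝ᵥ q(t) = 1 for all t. Then q(t) converges to q̄ as t → ∞ (with respect to any norm on n → ℝ); i.e., the equilibrium q̄ is globally asymptotically stable on the discrete mass-preserving subspace. -/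

import Mathlib

/-!
With `w = q - q̄`, the Lyapunov function `V = w ⬝ᵥ M w` satisfies `V' = -2 w ⬝ᵥ S w`, because `M`
is symmetric and `M q' = -S w`. Since `w` stays in the hyperplane `F ⬝ᵥ w = 0`, where both quadratic
forms are positive, compactness of the unit sphere gives `c > 0` with `w ⬝ᵥ S w ≥ c V`; hence
`V t ≤ V 0 * exp (-2 c t)`, and positive definiteness of `M` bounds `‖w‖ ^ 2` by a multiple of `V`.
-/

open Matrix Filter Topology

lemma le_mul_exp_of_hasDerivAt_le_neg_mul {V V' : ℝ → ℝ} {k : ℝ}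
    (hV : ∀ t, HasDerivAt V (V' t) t) (hV' : ∀ t, V' t ≤ -k * V t) {t : ℝ} (ht : 0 ≤ t) :
    V t ≤ V 0 * Real.exp (-(k * t)) := by
  have hanti : Antitone fun s => V s * Real.exp (k * s) := by
    refine antitone_of_hasDerivAt_nonpos
      (fun s => (hV s).mul (((hasDerivAt_id s).const_mul k).exp)) fun s => ?_
    have := hV' s
    simp only [id, mul_one, Pi.zero_apply]
    nlinarith [Real.exp_pos (k * s)]
  calc V t = V t * Real.exp (k * t) * Real.exp (-(k * t)) := by
        rw [mul_assoc, ← Real.exp_add]; simp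
    _ ≤ V 0 * Real.exp (-(k * t)) := by
      gcongr
      simpa using hanti ht

lemma tendsto_zero_of_hasDerivAt_le_neg_mul {V V' : ℝ → ℝ} {k : ℝ} (hk : 0 < k)
    (hV0 : ∀ t, 0 ≤ V t) (hV : ∀ t, HasDerivAt V (V' t) t) (hV' : ∀ t, V' t ≤ -k * V t) :
    Tendsto V atTop (𝓝 0) := by
  have hexp : Tendsto (fun t => V 0 * Real.exp (-(k * t))) atTop (𝓝 0) := by
    simpa using (Real.tendsto_exp_neg_atTop_nhds_zero.comp
      (tendsto_id.const_mul_atTop hk)).const_mul (V 0)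
  exact squeeze_zero' (.of_forall hV0)
    ((eventually_ge_atTop 0).mono fun t ht => le_mul_exp_of_hasDerivAt_le_neg_mul hV hV' ht) hexp

lemma exists_pos_mul_le_of_homogeneous {E : Type*} [NormedAddCommGroup E] [NormedSpace ℝ E]
    [ProperSpace E] {P : Set E} (hP : IsClosed P)
    (hP_smul : ∀ (c : ℝ), ∀ v ∈ P, c • v ∈ P) {f g : E → ℝ} (hf : Continuous f) (hg : Continuous g)
    (hf_smul : ∀ (c : ℝ) v, f (c • v) = c ^ 2 * f v)
    (hg_smul : ∀ (c : ℝ) v, g (c • v) = c ^ 2 * g v)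
    (hf_pos : ∀ v ∈ P, v ≠ 0 → 0 < f v) (hg_pos : ∀ v ∈ P, v ≠ 0 → 0 < g v) :
    ∃ c > 0, ∀ v ∈ P, c * f v ≤ g v := by
  set K := P ∩ Metric.sphere 0 1
  have hK_ne : ∀ u ∈ K, u ≠ 0 := fun u hu => ne_zero_of_mem_sphere one_ne_zero ⟨u, hu.2⟩
  have hfK : ∀ u ∈ K, 0 < f u := fun u hu => hf_pos u hu.1 (hK_ne u hu)
  obtain ⟨c, hc, hcK⟩ := ((isCompact_sphere 0 1).inter_left hP).exists_forall_le'
    (hg.continuousOn.div hf.continuousOn fun u hu => (hfK u hu).ne')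
    fun u hu => div_pos (hg_pos u hu.1 (hK_ne u hu)) (hfK u hu)
  refine ⟨c, hc, fun v hv => ?_⟩
  rcases eq_or_ne v 0 with rfl | hv0
  · simp [show f 0 = 0 by simpa using hf_smul 0 0, show g 0 = 0 by simpa using hg_smul 0 0]
  set u := ‖v‖⁻¹ • v
  have hu : u ∈ K := ⟨hP_smul _ _ hv, by simp [u, norm_smul, hv0]⟩
  have hv_eq : v = ‖v‖ • u := by simp [u, smul_smul, hv0]
  have hcu : c * f u ≤ g u := (le_div_iff₀ (hfK u hu)).1 (hcK u hu)
  rw [hv_eq, hf_smul, hg_smul, mul_left_comm]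
  exact mul_le_mul_of_nonneg_left hcu (sq_nonneg _)

lemma HasDerivAt.dotProduct {n : Type*} [Fintype n] {u v : ℝ → n → ℝ} {u' v' : n → ℝ}
    {t : ℝ} (hu : HasDerivAt u u' t) (hv : HasDerivAt v v' t) :
    HasDerivAt (fun s => u s ⬝ᵥ v s) (u' ⬝ᵥ v t + u t ⬝ᵥ v') t := by
  simp only [_root_.dotProduct, ← Finset.sum_add_distrib]
  exact .fun_sum fun i _ => (hasDerivAt_pi.1 hu i).mul (hasDerivAt_pi.1 hv i)

lemma HasDerivAt.mulVec {m n : Type*} [Fintype m] [Fintype n] (A : Matrix m n ℝ)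
    {u : ℝ → n → ℝ} {u' : n → ℝ} {t : ℝ} (hu : HasDerivAt u u' t) :
    HasDerivAt (fun s => A *ᵥ u s) (A *ᵥ u') t :=
  (A.mulVecLin.toContinuousLinearMap.hasFDerivAt (x := u t)).comp_hasDerivAt t hu

namespace Matrix

variable {n : Type*} [Fintype n]

lemma continuous_dotProduct_mulVec_self (A : Matrix n n ℝ) :
    Continuous fun v : n → ℝ => v ⬝ᵥ (A *ᵥ v) :=
  continuous_id.dotProduct (continuous_const.matrix_mulVec continuous_id)

lemma smul_dotProduct_mulVec_smul (A : Matrix n n ℝ) (c : ℝ) (v : n → ℝ) :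
    (c • v) ⬝ᵥ (A *ᵥ (c • v)) = c ^ 2 * (v ⬝ᵥ (A *ᵥ v)) := by
  simp only [mulVec_smul, smul_dotProduct, dotProduct_smul, smul_eq_mul]
  ring

lemma PosDef.exists_pos_mul_le_of_pos_on {M S : Matrix n n ℝ} (hM : M.PosDef)
    {P : Set (n → ℝ)} (hP : IsClosed P) (hP_smul : ∀ (c : ℝ), ∀ v ∈ P, c • v ∈ P)
    (hS : ∀ v ∈ P, v ≠ 0 → 0 < v ⬝ᵥ (S *ᵥ v)) :
    ∃ c > 0, ∀ v ∈ P, c * (v ⬝ᵥ (M *ᵥ v)) ≤ v ⬝ᵥ (S *ᵥ v) :=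
  exists_pos_mul_le_of_homogeneous hP hP_smul (continuous_dotProduct_mulVec_self M)
    (continuous_dotProduct_mulVec_self S) (smul_dotProduct_mulVec_smul M)
    (smul_dotProduct_mulVec_smul S) (fun v _ hv => by simpa using hM.dotProduct_mulVec_pos hv) hS

lemma PosDef.exists_pos_mul_norm_sq_le {M : Matrix n n ℝ} (hM : M.PosDef) :
    ∃ m > 0, ∀ v : n → ℝ, m * ‖v‖ ^ 2 ≤ v ⬝ᵥ (M *ᵥ v) := by
  obtain ⟨m, hm, hmM⟩ := exists_pos_mul_le_of_homogeneous (f := fun v => ‖v‖ ^ 2)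
    isClosed_univ (fun _ _ _ => Set.mem_univ _) (continuous_norm.pow 2)
    (continuous_dotProduct_mulVec_self M)
    (fun c v => by rw [norm_smul, mul_pow, Real.norm_eq_abs, sq_abs])
    (smul_dotProduct_mulVec_smul M) (fun v _ hv => pow_pos (norm_pos_iff.2 hv) 2)
    (fun v _ hv => by simpa using hM.dotProduct_mulVec_pos hv)
  exact ⟨m, hm, fun v => hmM v (Set.mem_univ v)⟩

lemma PosDef.dotProduct_mulVec_comm {M : Matrix n n ℝ} (hM : M.PosDef) (x y : n → ℝ) :
    x ⬝ᵥ (M *ᵥ y) = y ⬝ᵥ (M *ᵥ x) := by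
  conv_lhs => rw [← isHermitian_iff_isSymm.1 hM.isHermitian]
  exact dotProduct_transpose_mulVec M x y

end Matrix

theorem equilibrium_globally_asymptotically_stable_general
    {n : Type*} [Fintype n]
    (M : Matrix n n ℝ) (hM : M.PosDef) (S : Matrix n n ℝ)
    (F : n → ℝ) (qbar : n → ℝ)
    (hqbar : S *ᵥ qbar = 0) (hmass : F ⬝ᵥ qbar = 1)
    (hpos : ∀ w : n → ℝ, w ≠ 0 → F ⬝ᵥ w = 0 → 0 < w ⬝ᵥ (S *ᵥ w))
    (q q' : ℝ → (n → ℝ))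
    (hq : ∀ t, HasDerivAt q (q' t) t)
    (hdyn : ∀ t, M *ᵥ q' t + S *ᵥ q t = 0)
    (hqmass : ∀ t, F ⬝ᵥ q t = 1) :
    Filter.Tendsto q Filter.atTop (nhds qbar) := by
  set w := fun t => q t - qbar
  have hw : ∀ t, HasDerivAt w (q' t) t := fun t => (hq t).sub_const qbar
  have hFw : ∀ t, F ⬝ᵥ w t = 0 := fun t => by simp [w, dotProduct_sub, hqmass t, hmass]
  have hMq' : ∀ t, M *ᵥ q' t = -(S *ᵥ w t) := fun t => by
    simpa [w, mulVec_sub, hqbar] using eq_neg_of_add_eq_zero_left (hdyn t)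
  set V := fun t => w t ⬝ᵥ (M *ᵥ w t)
  have hV : ∀ t, HasDerivAt V (-(2 * (w t ⬝ᵥ (S *ᵥ w t)))) t := fun t => by
    convert (hw t).dotProduct ((hw t).mulVec M) using 1
    rw [hM.dotProduct_mulVec_comm, hMq', dotProduct_neg]
    ring
  obtain ⟨c, hc, hcS⟩ := hM.exists_pos_mul_le_of_pos_on
    (isClosed_eq (continuous_const.dotProduct continuous_id) continuous_const)
    (fun c v hv => by simp_all [dotProduct_smul])
    (fun v hv hv0 => hpos v hv0 hv)
  obtain ⟨m, hm, hmM⟩ := hM.exists_pos_mul_norm_sq_le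
  have hV_lim : Tendsto V atTop (𝓝 0) :=
    tendsto_zero_of_hasDerivAt_le_neg_mul (mul_pos two_pos hc)
      (fun t => (mul_nonneg hm.le (sq_nonneg _)).trans (hmM (w t))) hV
      (fun t => by linarith [hcS (w t) (hFw t)])
  have hw_sq : Tendsto (fun t => ‖w t‖ ^ 2) atTop (𝓝 0) :=
    squeeze_zero (fun t => sq_nonneg _) (fun t => (le_inv_mul_iff₀ hm).2 (hmM (w t)))
      (by simpa using hV_lim.const_mul m⁻¹)
  rw [tendsto_iff_norm_sub_tendsto_zero]
  simpa using hw_sq.sqrt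

/-- Global asymptotic stability on the discrete mass-preserving subspace: with `M`
symmetric positive-definite, `S *ᵥ q̄ = 0`, `F ⬝ᵥ q̄ = 1`, the quadratic form of `S`
strictly positive on nonzero zero-mean vectors, and `q` a mass-preserving solution of
`M q̇ + S q = 0`, the density `q(t)` converges to the equilibrium `q̄` as `t → ∞`. -/
theorem equilibrium_globally_asymptotically_stable
    {n : Type*} [Fintype n] [DecidableEq n] [Nonempty n]
    (M : Matrix n n ℝ) (hM : M.PosDef) (S : Matrix n n ℝ)
    (F : n → ℝ) (qbar : n → ℝ)
    (hqbar : S *ᵥ qbar = 0) (hmass : F ⬝ᵥ qbar = 1)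
    (hpos : ∀ w : n → ℝ, w ≠ 0 → F ⬝ᵥ w = 0 → 0 < w ⬝ᵥ (S *ᵥ w))
    (q q' : ℝ → (n → ℝ))
    (hq : ∀ t, HasDerivAt q (q' t) t)
    (hdyn : ∀ t, M *ᵥ q' t + S *ᵥ q t = 0)
    (hqmass : ∀ t, F ⬝ᵥ q t = 1) :
    Filter.Tendsto q Filter.atTop (nhds qbar) :=
  equilibrium_globally_asymptotically_stable_general M hM S F qbar hqbar hmass hpos q q' hq hdyn
    hqmass
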